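/- Let G₂ be convex and increasing on (0,∞) with G₂(t) = t·G'(t) for a convex increasing G with G(0)=G'(0)=0, let 0 < ϑ ≤ 1, 0 < ε₁ ≤ 1, and F₂, G₅ > 0 with F₂ > G₅/ϑ. Then G₂(ε₁·ϑ·F₂ − ε₁·G₅) ≤ ε₁·ϑ·G₂(F₂) − ε₁·ϑ·G₂(G₅/ϑ). -/

import Mathlib

open Set

/-- Sub-homogeneity: a convex function on `[0,∞)` with `f 0 ≤ 0` satisfies
`f (c*x) ≤ c * f x` for `c ∈ [0,1]`, `x ≥ 0`. -/
lemma convex_subhom {f : ℝ → ℝ} (hf : ConvexOn ℝ (Ici 0) f) (hf0 : f 0 ≤ 0)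
    {c x : ℝ} (hc0 : 0 ≤ c) (hc1 : c ≤ 1) (hx : 0 ≤ x) :
    f (c * x) ≤ c * f x := by
  have h := hf.2 (show x ∈ Ici 0 from hx) (show (0:ℝ) ∈ Ici 0 from mem_Ici.2 le_rfl)
    hc0 (show (0:ℝ) ≤ 1 - c by linarith) (by ring)
  simp only [smul_eq_mul, mul_zero, add_zero] at h
  nlinarith [h]

/-- Convexity estimate (4.30)-(4.33): for `G₂(t) = t G'(t)` convex and increasing,
`G₂(ε₁ ϑ F₂ - ε₁ G₅) ≤ ε₁ ϑ G₂(F₂) - ε₁ ϑ G₂(G₅/ϑ)`. -/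
theorem G2_convexity_estimate (G : ℝ → ℝ)
    (hGconv : ConvexOn ℝ (Ici 0) G)
    (hGmono : MonotoneOn G (Ici 0))
    (hG'mono : MonotoneOn (deriv G) (Ici 0))
    (hG0 : G 0 = 0) (hG'0 : deriv G 0 = 0)
    (hG2conv : ConvexOn ℝ (Ici 0) (fun t => t * deriv G t))
    (hG2mono : MonotoneOn (fun t => t * deriv G t) (Ici 0))
    (ϑ ε₁ F₂ G₅ : ℝ) (hϑ0 : 0 < ϑ) (hϑ1 : ϑ ≤ 1) (hε₁0 : 0 < ε₁) (hε₁1 : ε₁ ≤ 1)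
    (hF₂ : 0 < F₂) (hG₅ : 0 < G₅) (hgt : F₂ > G₅ / ϑ) :
    (ε₁ * ϑ * F₂ - ε₁ * G₅) * deriv G (ε₁ * ϑ * F₂ - ε₁ * G₅)
      ≤ ε₁ * ϑ * (F₂ * deriv G F₂) - ε₁ * ϑ * ((G₅ / ϑ) * deriv G (G₅ / ϑ)) := by
  set f : ℝ → ℝ := fun t => t * deriv G t with hf
  have hf0 : f 0 ≤ 0 := by simp [hf]
  set b : ℝ := G₅ / ϑ with hb
  have hb0 : 0 < b := div_pos hG₅ hϑ0
  have hab : 0 < F₂ - b := by linarith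
  -- Step 3: superadditivity f (F₂ - b) + f b ≤ f F₂
  have h3 : f (F₂ - b) + f b ≤ f F₂ := by
    have h1 : f ((F₂ - b) / F₂ * F₂) ≤ (F₂ - b) / F₂ * f F₂ :=
      convex_subhom hG2conv hf0 (by positivity)
        (by rw [div_le_one hF₂]; linarith) hF₂.le
    have h2 : f (b / F₂ * F₂) ≤ b / F₂ * f F₂ :=
      convex_subhom hG2conv hf0 (by positivity)
        (by rw [div_le_one hF₂]; linarith) hF₂.le
    rw [div_mul_cancel₀ _ hF₂.ne'] at h1 h2
    have : (F₂ - b) / F₂ * f F₂ + b / F₂ * f F₂ = f F₂ := by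
      field_simp
      ring
    linarith
  -- Step 2: f (ϑ * (F₂ - b)) ≤ ϑ * f (F₂ - b)
  have h2 : f (ϑ * (F₂ - b)) ≤ ϑ * f (F₂ - b) :=
    convex_subhom hG2conv hf0 hϑ0.le hϑ1 hab.le
  -- Step 1: f (ε₁ * (ϑ * (F₂ - b))) ≤ ε₁ * f (ϑ * (F₂ - b))
  have h1 : f (ε₁ * (ϑ * (F₂ - b))) ≤ ε₁ * f (ϑ * (F₂ - b)) :=
    convex_subhom hG2conv hf0 hε₁0.le hε₁1 (by positivity)
  have harg : ε₁ * ϑ * F₂ - ε₁ * G₅ = ε₁ * (ϑ * (F₂ - b)) := by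
    field_simp [hb]
    have hϑb : ϑ * b = G₅ := by rw [hb]; field_simp [hϑ0.ne']
    linarith
  have key : f (ε₁ * ϑ * F₂ - ε₁ * G₅) ≤ ε₁ * ϑ * f F₂ - ε₁ * ϑ * f b := by
    rw [harg]
    calc f (ε₁ * (ϑ * (F₂ - b))) ≤ ε₁ * f (ϑ * (F₂ - b)) := h1
      _ ≤ ε₁ * (ϑ * f (F₂ - b)) := by
          exact mul_le_mul_of_nonneg_left h2 hε₁0.le
      _ ≤ ε₁ * ϑ * f F₂ - ε₁ * ϑ * f b := by
          have := mul_le_mul_of_nonneg_left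
            (show f (F₂ - b) ≤ f F₂ - f b from by linarith)
            (show (0:ℝ) ≤ ε₁ * ϑ by positivity)
          nlinarith
  simpa [hf] using key
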